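/- arXiv:0805.2307 — 3 statements merged into one kernel-verified Lean document; each statement's English description precedes it below -/
import Mathlib

section
/- Let n be odd and let S be the 2×2 integer matrix [[kn, (n−1)/2], [(n+1)/2, (1−n)/2]] with w = (1, 0)ᵀ. Then wᵀSw = kn ≡ 0 (mod n) and the coloured untying invariant cu = (2·wᵀSw)/n mod n equals 2k mod n. In particular, as k ranges over 0,…,n−1, cu attains all n values in Z/n. -/
open Matrix

/-- The coloured untying invariant `cu(S, w) = (2·wᵀSw / n) mod n ∈ ℤ/n`. -/
def cu (n : ℕ) {m : ℕ} (S : Matrix (Fin m) (Fin m) ℤ) (w : Fin m → ℤ) : ZMod n :=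
  ((2 * (w ⬝ᵥ (S *ᵥ w)) / (n : ℤ) : ℤ) : ZMod n)

/-- For `S = [[kn, (n−1)/2], [(n+1)/2, (1−n)/2]]` and `w = (1,0)ᵀ` we have
`wᵀSw = kn ≡ 0 (mod n)` and `cu = 2k mod n`; as `k` ranges over `ℤ/n`, `cu` attains
all values. -/
theorem stmt10 (n : ℕ) (hodd : Odd n) (hpos : 0 < n) (k : ℤ) :
    let S : Matrix (Fin 2) (Fin 2) ℤ :=
      !![k * n, ((n : ℤ) - 1) / 2; ((n : ℤ) + 1) / 2, (1 - (n : ℤ)) / 2]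
    let w : Fin 2 → ℤ := ![1, 0]
    w ⬝ᵥ (S *ᵥ w) = k * n ∧
    (n : ℤ) ∣ w ⬝ᵥ (S *ᵥ w) ∧
    cu n S w = ((2 * k : ℤ) : ZMod n) ∧
    Function.Surjective (fun k : ZMod n => 2 * k) := by
  intro S w
  have hval : w ⬝ᵥ (S *ᵥ w) = k * n := by
    simp [S, w, dotProduct, Matrix.mulVec, Fin.sum_univ_two]
  have hn : (n : ℤ) ≠ 0 := by exact_mod_cast hpos.ne'
  refine ⟨hval, ⟨k, by rw [hval]; ring⟩, ?_, ?_⟩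
  · unfold cu
    rw [hval]
    congr 1
    rw [show 2 * (k * (n:ℤ)) = 2 * k * n by ring, Int.mul_ediv_cancel _ hn]
  · have h2 : IsUnit (2 : ZMod n) := by
      apply ZMod.isUnit_iff_coprime 2 n |>.mpr
      exact Nat.coprime_two_left.mpr hodd
    intro y
    exact ⟨(↑h2.unit⁻¹ : ZMod n) * y, by simp only []; rw [← mul_assoc, IsUnit.mul_val_inv, one_mul]⟩
end

section
/- Let n be odd and let v = (v₁, v₂) be a pair of elements of the cyclic group Cₙ = Z/n such that v₁ generates Cₙ. Then by a finite sequence of moves of the form (v₁, v₂) ↦ (v₁, v₂ ± v₁) and (v₁, v₂) ↦ (v₁ ± v₂, v₂), the pair (v₁, v₂) can be transformed into any other pair (v₁', v₂') in which v₁' or v₂' generates Cₙ. -/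
/-- A band-slide move on a pair: one coordinate is replaced by its sum or difference with
the other coordinate. -/
def slide (n : ℕ) (p q : ZMod n × ZMod n) : Prop :=
  (q.1 = p.1 ∧ (q.2 = p.2 + p.1 ∨ q.2 = p.2 - p.1)) ∨
  (q.2 = p.2 ∧ (q.1 = p.1 + p.2 ∨ q.1 = p.1 - p.2))

lemma slide_symm (n : ℕ) : Symmetric (slide n) := by
  rintro p q (⟨h1, h2 | h2⟩ | ⟨h1, h2 | h2⟩)
  · exact Or.inl ⟨h1.symm, Or.inr (by rw [h2, h1]; ring)⟩
  · exact Or.inl ⟨h1.symm, Or.inl (by rw [h2, h1]; ring)⟩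
  · exact Or.inr ⟨h1.symm, Or.inr (by rw [h2, h1]; ring)⟩
  · exact Or.inr ⟨h1.symm, Or.inl (by rw [h2, h1]; ring)⟩

lemma add_smul_snd (n : ℕ) (a b : ZMod n) (k : ℕ) :
    Relation.ReflTransGen (slide n) (a, b) (a, b + k • a) := by
  induction k with
  | zero => simpa using Relation.ReflTransGen.refl
  | succ k ih =>
    refine ih.tail (Or.inl ⟨rfl, Or.inl ?_⟩)
    simp [succ_nsmul]; ring

lemma add_smul_fst (n : ℕ) (a b : ZMod n) (k : ℕ) :
    Relation.ReflTransGen (slide n) (a, b) (a + k • b, b) := by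
  induction k with
  | zero => simpa using Relation.ReflTransGen.refl
  | succ k ih =>
    refine ih.tail (Or.inr ⟨rfl, Or.inl ?_⟩)
    simp [succ_nsmul]; ring

lemma add_mul_snd (n : ℕ) [NeZero n] (a b c : ZMod n) :
    Relation.ReflTransGen (slide n) (a, b) (a, b + c * a) := by
  have := add_smul_snd n a b c.val
  rwa [nsmul_eq_mul, ZMod.natCast_val, ZMod.cast_id] at this

lemma add_mul_fst (n : ℕ) [NeZero n] (a b c : ZMod n) :
    Relation.ReflTransGen (slide n) (a, b) (a + c * b, b) := by
  have := add_smul_fst n a b c.val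
  rwa [nsmul_eq_mul, ZMod.natCast_val, ZMod.cast_id] at this

lemma reach_fst (n : ℕ) [NeZero n] (a b : ZMod n) (h : IsUnit a) :
    Relation.ReflTransGen (slide n) (a, b) (1, 0) := by
  have hinv : a⁻¹ * a = 1 := ZMod.inv_mul_of_unit a h
  have s1 : Relation.ReflTransGen (slide n) (a, b) (a, 0) := by
    have := add_mul_snd n a b (-(b * a⁻¹))
    rwa [show b + -(b * a⁻¹) * a = 0 by rw [neg_mul, mul_assoc, hinv]; ring] at this
  have s2 : Relation.ReflTransGen (slide n) (a, 0) (a, a) := by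
    have := add_mul_snd n a 0 1
    rwa [zero_add, one_mul] at this
  have s3 : Relation.ReflTransGen (slide n) (a, a) (1, a) := by
    have := add_mul_fst n a a (a⁻¹ - 1)
    rwa [show a + (a⁻¹ - 1) * a = 1 by rw [sub_mul, mul_comm a⁻¹ a, mul_comm a a⁻¹, hinv]; ring]
      at this
  have s4 : Relation.ReflTransGen (slide n) (1, a) (1, 0) := by
    have := add_mul_snd n 1 a (-a)
    rwa [show a + -a * 1 = 0 by ring] at this
  exact ((s1.trans s2).trans s3).trans s4

lemma reach_snd (n : ℕ) [NeZero n] (a b : ZMod n) (h : IsUnit b) :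
    Relation.ReflTransGen (slide n) (a, b) (1, 0) := by
  have hinv : b⁻¹ * b = 1 := ZMod.inv_mul_of_unit b h
  have s1 : Relation.ReflTransGen (slide n) (a, b) (0, b) := by
    have := add_mul_fst n a b (-(a * b⁻¹))
    rwa [show a + -(a * b⁻¹) * b = 0 by rw [neg_mul, mul_assoc, hinv]; ring] at this
  have s2 : Relation.ReflTransGen (slide n) (0, b) (1, b) := by
    have := add_mul_fst n 0 b b⁻¹
    rwa [zero_add, hinv] at this
  have s3 : Relation.ReflTransGen (slide n) (1, b) (1, 0) := by
    have := add_mul_snd n 1 b (-b)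
    rwa [show b + -b * 1 = 0 by ring] at this
  exact (s1.trans s2).trans s3

/-- If `v₁` generates `ℤ/n` (n odd), then band slides transform `(v₁, v₂)` into any other
pair `(v₁', v₂')` in which `v₁'` or `v₂'` generates `ℤ/n`. -/
theorem stmt12 (n : ℕ) (hodd : Odd n) (hpos : 0 < n)
    (v₁ v₂ v₁' v₂' : ZMod n) (h1 : IsUnit v₁) (h2 : IsUnit v₁' ∨ IsUnit v₂') :
    Relation.ReflTransGen (slide n) (v₁, v₂) (v₁', v₂') := by
  haveI : NeZero n := ⟨hpos.ne'⟩
  have A : Relation.ReflTransGen (slide n) (v₁, v₂) (1, 0) := reach_fst n v₁ v₂ h1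
  have B : Relation.ReflTransGen (slide n) (v₁', v₂') (1, 0) := by
    rcases h2 with h | h
    · exact reach_fst n v₁' v₂' h
    · exact reach_snd n v₁' v₂' h
  exact A.trans (by haveI : Std.Symm (slide n) := ⟨slide_symm n⟩; exact (Relation.ReflTransGen.symmetric).symm _ _ B)
end

section
/- Let n be odd and consider pairs (a₁₁ mod n², a₁₂ mod n) with a₁₁ ≡ 0 mod n arising as the (1,1) and (1,2) entries of genus-one Seifert data compatible with a colouring vector (s,1). The allowed moves are: a₁₁ ↦ a₁₁ ± n², a₁₂ ↦ a₁₂ ± n, and a₂₂ ↦ arbitrary. Then every such pair can be brought to the normal form a₁₁ = kn with 0 ≤ k < n, a₁₂ = (n−1)/2, a₂₂ = (1−n)/2, and the residue k ∈ Z/n (equivalently 2k = cu mod n) is a complete invariant: two pairs are related by the moves iff they yield the same k. -/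
/-- The moves on genus-one surface data `(a₁₁, a₁₂, a₂₂)`: change `a₁₁` by `±n²`, change
`a₁₂` by `±n`, or change `a₂₂` arbitrarily. -/
def move19 (n : ℕ) (p q : ℤ × ℤ × ℤ) : Prop :=
  (q.2.1 = p.2.1 ∧ q.2.2 = p.2.2 ∧ (q.1 = p.1 + (n : ℤ) ^ 2 ∨ q.1 = p.1 - (n : ℤ) ^ 2)) ∨
  (q.1 = p.1 ∧ q.2.2 = p.2.2 ∧ (q.2.1 = p.2.1 + (n : ℤ) ∨ q.2.1 = p.2.1 - (n : ℤ))) ∨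
  (q.1 = p.1 ∧ q.2.1 = p.2.1)

lemma steps19 {r : ℤ → ℤ → Prop} (m : ℤ) (h : ∀ x, r x (x + m) ∧ r x (x - m))
    {a b : ℤ} (hd : m ∣ b - a) : Relation.ReflTransGen r a b := by
  obtain ⟨c, hc⟩ := hd
  have hb : b = a + m * c := by linarith
  subst hb
  induction c using Int.induction_on with
  | zero => simpa using Relation.ReflTransGen.refl
  | succ k ih =>
      refine (ih (by ring)).tail ?_
      have heq : a + m * (k + 1) = (a + m * k) + m := by ring
      rw [heq]; exact (h _).1
  | pred k ih =>
      refine (ih (by ring)).tail ?_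
      have heq : a + m * (-(k : ℤ) - 1) = (a + m * (-(k : ℤ))) - m := by ring
      rw [heq]; exact (h _).2

lemma reach19 (n : ℕ) (a₁₁ a₁₂ a₂₂ b₁₁ b₁₂ b₂₂ : ℤ)
    (h1 : ((n : ℤ)) ^ 2 ∣ b₁₁ - a₁₁) (h2 : (n : ℤ) ∣ b₁₂ - a₁₂) :
    Relation.ReflTransGen (move19 n) (a₁₁, a₁₂, a₂₂) (b₁₁, b₁₂, b₂₂) := by
  have s1 : Relation.ReflTransGen (move19 n) (a₁₁, a₁₂, a₂₂) (a₁₁, a₁₂, b₂₂) :=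
    Relation.ReflTransGen.single (Or.inr (Or.inr ⟨rfl, rfl⟩))
  have s2 : Relation.ReflTransGen (move19 n) (a₁₁, a₁₂, b₂₂) (a₁₁, b₁₂, b₂₂) := by
    have hs := steps19 (r := fun x y => move19 n (a₁₁, x, b₂₂) (a₁₁, y, b₂₂)) (n : ℤ)
      (fun x => ⟨Or.inr (Or.inl ⟨rfl, rfl, Or.inl rfl⟩),
                 Or.inr (Or.inl ⟨rfl, rfl, Or.inr rfl⟩)⟩) h2
    exact Relation.ReflTransGen.lift (fun x => (a₁₁, x, b₂₂)) (fun a b h => h) _ _ hs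
  have s3 : Relation.ReflTransGen (move19 n) (a₁₁, b₁₂, b₂₂) (b₁₁, b₁₂, b₂₂) := by
    have hs := steps19 (r := fun x y => move19 n (x, b₁₂, b₂₂) (y, b₁₂, b₂₂)) ((n : ℤ) ^ 2)
      (fun x => ⟨Or.inl ⟨rfl, rfl, Or.inl rfl⟩, Or.inl ⟨rfl, rfl, Or.inr rfl⟩⟩) h1
    exact Relation.ReflTransGen.lift (fun x => (x, b₁₂, b₂₂)) (fun a b h => h) _ _ hs
  exact (s1.trans s2).trans s3

lemma inv19 (n : ℕ) {p q : ℤ × ℤ × ℤ} (h : Relation.ReflTransGen (move19 n) p q) :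
    ((n : ℤ)) ^ 2 ∣ q.1 - p.1 := by
  induction h with
  | refl => simp
  | @tail b c _ hstep ih =>
      have hd : ((n : ℤ)) ^ 2 ∣ c.1 - b.1 := by
        rcases hstep with ⟨_, _, h | h⟩ | ⟨h, _, _⟩ | ⟨h, _⟩ <;>
          simp [h]
      have h2 : c.1 - p.1 = (c.1 - b.1) + (b.1 - p.1) := by ring
      rw [h2]; exact dvd_add hd ih

/-- Every compatible triple (`n ∣ a₁₁`, `n ∣ 2a₁₂+1`) can be brought by the moves to the
normal form `(kn, (n−1)/2, (1−n)/2)` with `0 ≤ k < n`, and the residue `a₁₁/n mod n` is a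
complete invariant: two compatible triples are related by the moves iff they yield the
same `k`. -/
theorem stmt19 (n : ℕ) (hodd : Odd n) (hpos : 0 < n) :
    (∀ a₁₁ a₁₂ a₂₂ : ℤ, (n : ℤ) ∣ a₁₁ → (n : ℤ) ∣ (2 * a₁₂ + 1) →
      ∃ k : ℕ, k < n ∧
        Relation.ReflTransGen (move19 n) (a₁₁, a₁₂, a₂₂)
          ((k : ℤ) * n, ((n : ℤ) - 1) / 2, (1 - (n : ℤ)) / 2)) ∧
    (∀ a₁₁ a₁₂ a₂₂ b₁₁ b₁₂ b₂₂ : ℤ,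
      (n : ℤ) ∣ a₁₁ → (n : ℤ) ∣ (2 * a₁₂ + 1) →
      (n : ℤ) ∣ b₁₁ → (n : ℤ) ∣ (2 * b₁₂ + 1) →
      (Relation.ReflTransGen (move19 n) (a₁₁, a₁₂, a₂₂) (b₁₁, b₁₂, b₂₂) ↔
        ((a₁₁ / n : ℤ) : ZMod n) = ((b₁₁ / n : ℤ) : ZMod n))) := by
  have hn0 : (n : ℤ) ≠ 0 := by exact_mod_cast hpos.ne'
  have hco : IsCoprime (n : ℤ) 2 := by
    rw [Int.isCoprime_iff_gcd_eq_one]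
    obtain ⟨m, hm⟩ := hodd
    subst hm
    simp [Int.gcd]
    all_goals omega
  have hhalf : 2 * (((n : ℤ) - 1) / 2) + 1 = (n : ℤ) := by
    obtain ⟨m, hm⟩ := hodd
    subst hm
    push_cast
    omega
  have hdvd2 : ∀ a b : ℤ, (n : ℤ) ∣ (2 * a + 1) → (n : ℤ) ∣ (2 * b + 1) →
      (n : ℤ) ∣ b - a := by
    intro a b ha hb
    have h1 : (n : ℤ) ∣ 2 * (b - a) := by
      have := dvd_sub hb ha
      have heq : 2 * b + 1 - (2 * a + 1) = 2 * (b - a) := by ring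
      rwa [heq] at this
    exact hco.dvd_of_dvd_mul_left h1
  have hhalfdvd : (n : ℤ) ∣ 2 * (((n : ℤ) - 1) / 2) + 1 := by rw [hhalf]
  constructor
  · intro a₁₁ a₁₂ a₂₂ ha hb
    obtain ⟨x, hx⟩ := ha
    set k : ℕ := (x % n).toNat with hk
    have hxm : 0 ≤ x % n := Int.emod_nonneg x hn0
    have hxlt : x % n < n := Int.emod_lt_of_pos x (by exact_mod_cast hpos)
    have hkx : (k : ℤ) = x % n := Int.toNat_of_nonneg hxm
    refine ⟨k, ?_, ?_⟩
    · have : (k : ℤ) < n := hkx ▸ hxlt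
      exact_mod_cast this
    · refine reach19 n _ _ _ _ _ _ ?_ (hdvd2 _ _ hb hhalfdvd)
      subst hx
      rw [hkx]
      have heq : x % n * (n : ℤ) - (n : ℤ) * x = (n : ℤ) * (-(n * (x / n))) := by
        rw [Int.emod_def]; ring
      rw [heq, pow_two]
      exact mul_dvd_mul_left _ ⟨-(x / n), by ring⟩
  · intro a₁₁ a₁₂ a₂₂ b₁₁ b₁₂ b₂₂ ha ha2 hb hb2
    obtain ⟨x, hx⟩ := ha
    obtain ⟨y, hy⟩ := hb
    have hdx : a₁₁ / (n : ℤ) = x := by rw [hx]; exact Int.mul_ediv_cancel_left x hn0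
    have hdy : b₁₁ / (n : ℤ) = y := by rw [hy]; exact Int.mul_ediv_cancel_left y hn0
    rw [hdx, hdy, ZMod.intCast_eq_intCast_iff, Int.modEq_iff_dvd]
    constructor
    · intro h
      have h2 := inv19 n h
      simp only at h2
      have heq : b₁₁ - a₁₁ = (n : ℤ) * (y - x) := by rw [hx, hy]; ring
      rw [heq, pow_two] at h2
      exact (mul_dvd_mul_iff_left hn0).mp h2
    · intro h
      refine reach19 n _ _ _ _ _ _ ?_ (hdvd2 _ _ ha2 hb2)
      have heq : b₁₁ - a₁₁ = (n : ℤ) * (y - x) := by rw [hx, hy]; ring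
      rw [heq, pow_two]
      exact mul_dvd_mul_left ((n : ℤ)) h
end
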